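/- For the Stiefel manifold V_2 R^n with tangent space m = m_{12} ⊕ m_{13} ⊕ m_{23} ⊂ so(n) and the Einstein metric Λ = 1·Id_{m_{12}} + λ·Id_{m_{13}} + λ·Id_{m_{23}} (λ > 0, λ ≠ 1), a vector X = a_{12}ξ_{12} + Σ_{j=3}^n (a_{1j}ξ_{1j} + a_{2j}ξ_{2j}) satisfies [X, ΛX]_m = 0 if and only if a_{12}a_{1j} = 0 and a_{12}a_{2j} = 0 for all 3 ≤ j ≤ n; equivalently, if and only if either a_{12} = 0 (i.e., X ∈ m_{13} ⊕ m_{23}) or all a_{1j} = a_{2j} = 0 (i.e., X ∈ m_{12}). -/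

import Mathlib

open Matrix

/-- `ξ a b = E_{ab} - E_{ba}` in the n×n real matrices. -/
noncomputable def xiM {n : ℕ} (a b : Fin n) : Matrix (Fin n) (Fin n) ℝ :=
  Matrix.single a b 1 - Matrix.single b a 1

/-- Projection of `so(n)` onto `m` along `so(n-2)`. -/
noncomputable def projV (n : ℕ) (A : Matrix (Fin n) (Fin n) ℝ) :
    Matrix (Fin n) (Fin n) ℝ :=
  Matrix.of fun i j => if i.val < 2 ∨ j.val < 2 then A i j else 0

/-! Since `ΛX = λ X + (1 - λ) X₁₂`, the bracket `[X, ΛX]` equals `(λ - 1) [X₁₂, X₁₃ + X₂₃]`.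
By `[ξ₁₂, ξ₁ⱼ] = -ξ₂ⱼ` and `[ξ₁₂, ξ₂ⱼ] = ξ₁ⱼ` this is `(λ - 1) a₁₂ ∑ⱼ (a₂ⱼ ξ₁ⱼ - a₁ⱼ ξ₂ⱼ)`,
which already lies in `m`; its coefficients are the entries of its first two rows. -/

theorem lie_add_smul_right {R L : Type*} [CommRing R] [LieRing L] [LieAlgebra R L]
    (x y : L) (c : R) : ⁅x + y, x + c • y⁆ = (c - 1) • ⁅x, y⁆ := by
  rw [add_lie, lie_add, lie_add, lie_smul, lie_smul, lie_self, lie_self, ← lie_skew y x,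
    sub_smul, one_smul, smul_zero]
  abel

theorem or_forall_iff_forall_mul_eq_zero {R ι : Type*} [MulZeroClass R]
    [NoZeroDivisors R] (c : R) (p : ι → Prop) (f g : ι → R) :
    (c = 0 ∨ ∀ i, p i → f i = 0 ∧ g i = 0) ↔ ∀ i, p i → c * f i = 0 ∧ c * g i = 0 := by
  by_cases hc : c = 0 <;> simp [hc]

section

attribute [local instance 100] LieRing.ofAssociativeRing

variable {n : ℕ}

theorem xiM_apply (a b i j : Fin n) :
    xiM a b i j = (if a = i ∧ b = j then 1 else 0) - (if b = i ∧ a = j then 1 else 0) := by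
  simp [xiM, Matrix.single_apply]

theorem lie_xiM_xiM_left {a b c : Fin n} (hab : a ≠ b) (hac : a ≠ c) (hbc : b ≠ c) :
    ⁅xiM a b, xiM a c⁆ = -xiM b c := by
  simp only [xiM, Ring.lie_def, sub_mul, mul_sub, single_mul_single_same,
    single_mul_single_of_ne _ _ _ _ hab, single_mul_single_of_ne _ _ _ _ hab.symm,
    single_mul_single_of_ne _ _ _ _ hbc, single_mul_single_of_ne _ _ _ _ hbc.symm,
    single_mul_single_of_ne _ _ _ _ hac, single_mul_single_of_ne _ _ _ _ hac.symm, one_mul]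
  abel

theorem lie_xiM_xiM_right {a b c : Fin n} (hab : a ≠ b) (hac : a ≠ c) (hbc : b ≠ c) :
    ⁅xiM a b, xiM b c⁆ = xiM a c := by
  simp only [xiM, Ring.lie_def, sub_mul, mul_sub, single_mul_single_same,
    single_mul_single_of_ne _ _ _ _ hab, single_mul_single_of_ne _ _ _ _ hab.symm,
    single_mul_single_of_ne _ _ _ _ hbc, single_mul_single_of_ne _ _ _ _ hbc.symm,
    single_mul_single_of_ne _ _ _ _ hac, single_mul_single_of_ne _ _ _ _ hac.symm, one_mul]
  abel

variable {a b : Fin n} {S : Finset (Fin n)}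

theorem lie_xiM_sum (hab : a ≠ b) (ha : a ∉ S) (hb : b ∉ S) (u w : Fin n → ℝ) :
    ⁅xiM a b, ∑ k ∈ S, (u k • xiM a k + w k • xiM b k)⁆
      = ∑ k ∈ S, ((-u k) • xiM b k + w k • xiM a k) := by
  rw [lie_sum]
  refine Finset.sum_congr rfl fun k hk => ?_
  have hak : a ≠ k := (ne_of_mem_of_not_mem hk ha).symm
  have hbk : b ≠ k := (ne_of_mem_of_not_mem hk hb).symm
  rw [lie_add, lie_smul, lie_smul, lie_xiM_xiM_left hab hak hbk,
    lie_xiM_xiM_right hab hak hbk, smul_neg, neg_smul]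

theorem sum_xiM_apply_left (hab : a ≠ b) (ha : a ∉ S) {j : Fin n} (hj : j ∈ S)
    (v w : Fin n → ℝ) : (∑ k ∈ S, (v k • xiM a k + w k • xiM b k)) a j = v j := by
  have hS : ∀ k ∈ S, k ≠ a := fun k hk => ne_of_mem_of_not_mem hk ha
  rw [Matrix.sum_apply, Finset.sum_eq_single j]
  · simp [xiM_apply, hab.symm, hS j hj]
  · intro k hk hkj
    simp [xiM_apply, hab.symm, hS k hk, hkj]
  · exact fun h => (h hj).elim

theorem sum_xiM_eq_zero_iff (hab : a ≠ b) (ha : a ∉ S) (hb : b ∉ S) (v w : Fin n → ℝ) :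
    ∑ k ∈ S, (v k • xiM a k + w k • xiM b k) = 0 ↔ ∀ j ∈ S, v j = 0 ∧ w j = 0 := by
  constructor
  · intro h j hj
    have hv := sum_xiM_apply_left hab ha hj v w
    have hw := sum_xiM_apply_left hab.symm hb hj w v
    rw [h] at hv
    rw [Finset.sum_congr rfl fun k _ => add_comm _ _, h] at hw
    exact ⟨hv.symm, hw.symm⟩
  · intro h
    refine Finset.sum_eq_zero fun k hk => ?_
    rw [(h k hk).1, (h k hk).2, zero_smul, zero_smul, add_zero]

theorem projV_smul (c : ℝ) (A : Matrix (Fin n) (Fin n) ℝ) :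
    projV n (c • A) = c • projV n A := by
  ext i j
  simp only [projV, of_apply, Matrix.smul_apply, smul_ite, smul_zero]

theorem projV_sum_xiM (ha : a.val < 2) (hb : b.val < 2) (v w : Fin n → ℝ) :
    projV n (∑ k ∈ S, (v k • xiM a k + w k • xiM b k))
      = ∑ k ∈ S, (v k • xiM a k + w k • xiM b k) := by
  ext i j
  simp only [projV, of_apply, ite_eq_left_iff, not_or, not_lt]
  rintro ⟨hi, hj⟩
  have hai : a ≠ i := Fin.ne_of_val_ne (by omega)
  have haj : a ≠ j := Fin.ne_of_val_ne (by omega)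
  have hbi : b ≠ i := Fin.ne_of_val_ne (by omega)
  have hbj : b ≠ j := Fin.ne_of_val_ne (by omega)
  simp [Matrix.sum_apply, xiM_apply, hai, haj, hbi, hbj]

theorem lie_eq_smul_sum_xiM (hab : a ≠ b) (ha : a ∉ S) (hb : b ∉ S) (c lam : ℝ)
    (u w : Fin n → ℝ) :
    ⁅c • xiM a b + ∑ k ∈ S, u k • xiM a k + ∑ k ∈ S, w k • xiM b k,
      c • xiM a b + lam • (∑ k ∈ S, u k • xiM a k + ∑ k ∈ S, w k • xiM b k)⁆
      = ((lam - 1) * c) • ∑ k ∈ S, ((-u k) • xiM b k + w k • xiM a k) := by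
  rw [add_assoc, lie_add_smul_right, ← Finset.sum_add_distrib, smul_lie,
    lie_xiM_sum hab ha hb, smul_smul]

end

/-- Einstein equigeodesic vectors on `(V₂ℝⁿ, Λ = (1, λ, λ))`. -/
theorem stmt8 (n : ℕ) (hn : 2 ≤ n) (lam : ℝ) (hne : lam ≠ 1)
    (a12 : ℝ) (a1 a2 : Fin n → ℝ) :
    let i0 : Fin n := ⟨0, by omega⟩
    let i1 : Fin n := ⟨1, by omega⟩
    let X12 := a12 • xiM i0 i1
    let X13 := ∑ j ∈ Finset.univ.filter (fun j : Fin n => 2 ≤ j.val),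
      a1 j • xiM i0 j
    let X23 := ∑ j ∈ Finset.univ.filter (fun j : Fin n => 2 ≤ j.val),
      a2 j • xiM i1 j
    let X := X12 + X13 + X23
    let LX := X12 + lam • (X13 + X23)
    (projV n ⁅X, LX⁆ = 0 ↔
      ∀ j : Fin n, 2 ≤ j.val → a12 * a1 j = 0 ∧ a12 * a2 j = 0) ∧
    (projV n ⁅X, LX⁆ = 0 ↔
      (a12 = 0 ∨ ∀ j : Fin n, 2 ≤ j.val → a1 j = 0 ∧ a2 j = 0)) := by
  intro i0 i1 X12 X13 X23 X LX
  set S := Finset.univ.filter (fun j : Fin n => 2 ≤ j.val)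
  have h0 : i0 ∉ S := by simp [S, i0]
  have h1 : i1 ∉ S := by simp [S, i1]
  have h01 : i0 ≠ i1 := by simp [i0, i1, Fin.ext_iff]
  have hproj : projV n ⁅X, LX⁆
      = ((lam - 1) * a12) • ∑ k ∈ S, ((-a1 k) • xiM i1 k + a2 k • xiM i0 k) := by
    rw [lie_eq_smul_sum_xiM h01 h0 h1, projV_smul, projV_sum_xiM (by simp [i1]) (by simp [i0])]
  have hzero : projV n ⁅X, LX⁆ = 0 ↔
      a12 = 0 ∨ ∀ j : Fin n, 2 ≤ j.val → a1 j = 0 ∧ a2 j = 0 := by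
    rw [hproj, smul_eq_zero, mul_eq_zero, sum_xiM_eq_zero_iff h01.symm h1 h0]
    simp [S, sub_eq_zero, hne]
  exact ⟨hzero.trans (or_forall_iff_forall_mul_eq_zero _ _ _ _), hzero⟩
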